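/- arXiv:1806.08004 — 3 statements merged into one kernel-verified Lean document; each statement's English description precedes it below -/
import Mathlib

section
/- Let (α_k)_{k=1}^M be real numbers with −π < α_k < π for all k and ∑_{k=1}^M α_k = 2π, and let θ ∈ (0, π). Then there exists an index i* with 1 ≤ i* ≤ M such that ∑_{k=1}^{i*−1} α_k ≤ θ and θ < ∑_{k=1}^{i*} α_k < θ + π. -/
theorem Nat.exists_le_lt_succ_of_le_of_lt {β : Type*} [LinearOrder β] {f : ℕ → β} {a : β}
    {n : ℕ} (h0 : f 0 ≤ a) (hn : a < f n) : ∃ i < n, f i ≤ a ∧ a < f (i + 1) := by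
  induction n with
  | zero => exact absurd hn (not_lt.mpr h0)
  | succ n ih =>
    by_cases h : a < f n
    · obtain ⟨i, hi, hfi⟩ := ih h
      exact ⟨i, by omega, hfi⟩
    · exact ⟨n, by omega, not_lt.mp h, hn⟩

/-- Discrete crossing lemma: if real numbers `α 1, …, α M` all lie strictly
between `−π` and `π` and sum to `2π`, and `θ ∈ (0, π)`, then there is an index
`i*` with `1 ≤ i* ≤ M` such that the partial sum up to `i* − 1` is `≤ θ` while
the partial sum up to `i*` lies strictly in `(θ, θ + π)`. -/
theorem partial_sum_crossing (M : ℕ) (α : ℕ → ℝ) (θ : ℝ)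
    (hα : ∀ k, 1 ≤ k → k ≤ M → -Real.pi < α k ∧ α k < Real.pi)
    (hsum : ∑ k ∈ Finset.Icc 1 M, α k = 2 * Real.pi)
    (hθ0 : 0 < θ) (hθπ : θ < Real.pi) :
    ∃ i, 1 ≤ i ∧ i ≤ M ∧
      (∑ k ∈ Finset.Icc 1 (i - 1), α k) ≤ θ ∧
      θ < (∑ k ∈ Finset.Icc 1 i, α k) ∧
      (∑ k ∈ Finset.Icc 1 i, α k) < θ + Real.pi := by
  obtain ⟨i, hiM, hle, hlt⟩ :=
    Nat.exists_le_lt_succ_of_le_of_lt (f := fun i ↦ ∑ k ∈ Finset.Icc 1 i, α k)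
      (by simpa using hθ0.le) (by rw [hsum]; linarith)
  have hstep : ∑ k ∈ Finset.Icc 1 (i + 1), α k = ∑ k ∈ Finset.Icc 1 i, α k + α (i + 1) :=
    Finset.sum_Icc_succ_top (by omega) α
  refine ⟨i + 1, by omega, hiM, by simpa using hle, hlt, ?_⟩
  linarith [(hα (i + 1) (by omega) hiM).2]
end

section
/- There is no finite sequence of unit vectors n₁, …, n_M, n_{M+1} = n₁ in ℝ² and angles α₁, …, α_M with −π < α_i < π, n_{i+1} = R_{α_i} n_i for all i, ∑_{i=1}^M α_i = 2π, and a unit vector Ω such that ⟨n_i, Ω⟩ > 0 for all i = 1, …, M. -/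
/-- Counterclockwise rotation of the plane by angle `α`. -/
noncomputable def rot (α : ℝ) (v : ℝ × ℝ) : ℝ × ℝ :=
  (Real.cos α * v.1 - Real.sin α * v.2, Real.sin α * v.1 + Real.cos α * v.2)

/-- Euclidean inner product on `ℝ²`. -/
def dot2 (u v : ℝ × ℝ) : ℝ := u.1 * v.1 + u.2 * v.2

/-!
Measure each `n i` by its angle `βᵢ = arg (n i · conj Ω) ∈ (-π/2, π/2)` relative to `Ω`.
A rotation by `αᵢ ∈ (-π, π)` changes this angle by `αᵢ` modulo `2π`, and since both
`βᵢ` and `βᵢ₊₁` lie in `(-π/2, π/2)` the error is less than `2π`, hence zero: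
`βᵢ₊₁ = βᵢ + αᵢ` exactly. Telescoping around the closed chain gives `0 = ∑ αᵢ = 2π`.
-/

open Complex ComplexConjugate Real

def toComplex (v : ℝ × ℝ) : ℂ := ⟨v.1, v.2⟩

lemma toComplex_rot (a : ℝ) (v : ℝ × ℝ) :
    toComplex (rot a v) = exp (a * I) * toComplex v := by
  rw [exp_mul_I]
  apply Complex.ext <;>
    simp only [toComplex, rot, mul_re, mul_im, add_re, add_im, I_re, I_im, cos_ofReal_re,
      sin_ofReal_re, cos_ofReal_im, sin_ofReal_im] <;> ring

lemma dot2_eq_re_mul_conj (u v : ℝ × ℝ) : dot2 u v = (toComplex u * conj (toComplex v)).re := by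
  simp [toComplex, dot2, mul_re]

lemma Complex.arg_exp_mul_I_mul_of_re_pos {z : ℂ} {a : ℝ} (ha : |a| < π) (hz : 0 < z.re)
    (hw : 0 < (exp (a * I) * z).re) : arg (exp (a * I) * z) = arg z + a := by
  have hz0 : z ≠ 0 := by rintro rfl; simp at hz
  obtain ⟨k, hk⟩ : ∃ k : ℤ, arg (exp (a * I) * z) - (arg z + a) = 2 * π * k := by
    rw [← Real.Angle.angle_eq_iff_two_pi_dvd_sub, Real.Angle.coe_add,
      arg_mul_coe_angle (exp_ne_zero _) hz0, arg_exp_mul_I, Real.Angle.coe_toIocMod, add_comm]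
  have harg_z := abs_arg_lt_pi_div_two_iff.2 (Or.inl hz)
  have harg_w := abs_arg_lt_pi_div_two_iff.2 (Or.inl hw)
  have hk_small : |2 * π * k| < 2 * π * 1 := by
    rw [← hk, abs_lt]
    rw [abs_lt] at ha harg_z harg_w
    constructor <;> linarith
  rw [abs_mul, abs_of_pos two_pi_pos, mul_lt_mul_iff_right₀ two_pi_pos] at hk_small
  have hk0 : k = 0 := Int.abs_lt_one_iff.1 (by exact_mod_cast hk_small)
  simp only [hk0, Int.cast_zero, mul_zero] at hk
  linarith

theorem no_positive_cycle_general (M : ℕ) (hM : 1 ≤ M)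
    (n : ℕ → ℝ × ℝ) (α : ℕ → ℝ) (Ω : ℝ × ℝ)
    (hα : ∀ i, 1 ≤ i → i ≤ M → -Real.pi < α i ∧ α i < Real.pi)
    (hstep : ∀ i, 1 ≤ i → i ≤ M → n (i + 1) = rot (α i) (n i))
    (hclosed : n (M + 1) = n 1)
    (hsum : ∑ i ∈ Finset.Icc 1 M, α i = 2 * Real.pi)
    (hpos : ∀ i, 1 ≤ i → i ≤ M → 0 < dot2 (n i) Ω) :
    False := by
  set z : ℕ → ℂ := fun i => toComplex (n i) * conj (toComplex Ω)
  have hre : ∀ i, 1 ≤ i → i ≤ M + 1 → 0 < (z i).re := by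
    intro i h1 h2
    rcases h2.lt_or_eq with h | rfl
    · simpa only [z, ← dot2_eq_re_mul_conj] using hpos i h1 (by omega)
    · simpa only [z, hclosed, ← dot2_eq_re_mul_conj] using hpos 1 le_rfl hM
  have hturn : ∀ i ∈ Finset.Icc 1 M, arg (z (i + 1)) - arg (z i) = α i := by
    intro i hi
    obtain ⟨h1, h2⟩ := Finset.mem_Icc.1 hi
    have hz_step : z (i + 1) = exp (α i * I) * z i := by
      simp only [z, hstep i h1 h2, toComplex_rot, mul_assoc]
    have hre_step := hre (i + 1) (by omega) (by omega)
    rw [hz_step] at hre_step ⊢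
    rw [arg_exp_mul_I_mul_of_re_pos (abs_lt.2 (hα i h1 h2)) (hre i h1 (by omega)) hre_step]
    ring
  have hwinding : arg (z (M + 1)) - arg (z 1) = 2 * π := by
    rw [← Finset.sum_Icc_sub hM (fun i => arg (z i)), Finset.sum_congr rfl hturn, hsum]
  simp only [z, hclosed, sub_self] at hwinding
  linarith [pi_pos]

/-- There is no closed chain of unit vectors `n 1, …, n M, n (M+1) = n 1` in
`ℝ²`, with turning angles `α i ∈ (−π, π)` summing to `2π`, such that all `n i`
have positive inner product with a fixed unit vector `Ω`. -/
theorem no_positive_cycle (M : ℕ) (hM : 1 ≤ M)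
    (n : ℕ → ℝ × ℝ) (α : ℕ → ℝ) (Ω : ℝ × ℝ)
    (hΩ : dot2 Ω Ω = 1)
    (hunit : ∀ i, 1 ≤ i → i ≤ M → dot2 (n i) (n i) = 1)
    (hα : ∀ i, 1 ≤ i → i ≤ M → -Real.pi < α i ∧ α i < Real.pi)
    (hstep : ∀ i, 1 ≤ i → i ≤ M → n (i + 1) = rot (α i) (n i))
    (hclosed : n (M + 1) = n 1)
    (hsum : ∑ i ∈ Finset.Icc 1 M, α i = 2 * Real.pi)
    (hpos : ∀ i, 1 ≤ i → i ≤ M → 0 < dot2 (n i) Ω) :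
    False :=
  no_positive_cycle_general M hM n α Ω hα hstep hclosed hsum hpos
end

section
/- There exists a finite family of pairwise non-overlapping convex quadrilateral prisms (convex polytopes) in ℝ³ and a direction Ω = (0,0,−1) such that the induced dependency relation (cell C depends on C' if they share a 2-dimensional face with inward normal n of C satisfying ⟨n, Ω⟩ > 0) contains a directed cycle. -/
open scoped RealInnerProductSpace

/-- A directed cycle in a directed graph given by an edge relation `E`. -/
def HasDirectedCycle {V : Type*} (E : V → V → Prop) : Prop :=
  ∃ (m : ℕ) (f : ℕ → V), 0 < m ∧ f m = f 0 ∧ ∀ i < m, E (f i) (f (i + 1))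

/-!
Four prisms over the square `[0, 3]²` are arranged like a pinwheel around the vertical line
through `(3/2, 3/2)`, each a quarter turn of the previous one. Their top faces are pushed towards
that line, so the facet shared by consecutive prisms `i` and `i + 1` is tilted: it lies in a plane
`⟪v, x⟫ = c` separating the two prisms, with `v` pointing into prism `i` and downwards. Hence
every prism depends on the next one, and the dependencies close up into a cycle of length four.
The same planes, and one more for each pair of opposite prisms, separate the interiors.
-/

open Set Module

open Fin.NatCast in
lemma hasDirectedCycle_of_forall_add_one {n : ℕ} [NeZero n] (E : Fin n → Fin n → Prop)
    (h : ∀ i, E i (i + 1)) : HasDirectedCycle E :=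
  ⟨n, fun k => (k : Fin n), Nat.pos_of_neZero n, by simp, fun k _ => by simpa using h k⟩

section InnerProductSpace

variable {E : Type*} [NormedAddCommGroup E] [InnerProductSpace ℝ E]

def Separates (v : E) (c : ℝ) (s t : Set E) : Prop :=
  s ⊆ {x | c ≤ ⟪v, x⟫} ∧ t ⊆ {x | ⟪v, x⟫ ≤ c}

def FlowDependsOn (Ω : E) (s t : Set E) : Prop :=
  ∃ n : E, ‖n‖ = 1 ∧ ¬ Collinear ℝ (s ∩ t) ∧
    (∀ x ∈ s ∩ t, ∀ y ∈ s ∩ t, ⟪n, x - y⟫ = 0) ∧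
    (∀ x ∈ s, ∀ y ∈ s ∩ t, 0 ≤ ⟪n, x - y⟫) ∧ 0 < ⟪n, Ω⟫

variable {v : E} {c : ℝ} {s t : Set E}

lemma Separates.inner_eq_of_mem_inter (h : Separates v c s t) {x : E} (hx : x ∈ s ∩ t) :
    ⟪v, x⟫ = c :=
  le_antisymm (h.2 hx.2) (h.1 hx.1)

lemma separates_convexHull_range {ι : Type*} {p q : ι → E} (hp : ∀ k, c ≤ ⟪v, p k⟫)
    (hq : ∀ k, ⟪v, q k⟫ ≤ c) :
    Separates v c (convexHull ℝ (range p)) (convexHull ℝ (range q)) :=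
  ⟨convexHull_min (range_subset_iff.2 hp) (convex_halfSpace_ge (innerₛₗ ℝ v).isLinear c),
    convexHull_min (range_subset_iff.2 hq) (convex_halfSpace_le (innerₛₗ ℝ v).isLinear c)⟩

/-- The open map `⟪v, ·⟫` sends the open set `interior s ∩ interior t` into `{c}`, which is not
open. -/
lemma Separates.interior_inter_interior_eq_empty (h : Separates v c s t) (hv : v ≠ 0) :
    interior s ∩ interior t = ∅ := by
  set f := innerSL ℝ v
  have hf : f ≠ 0 := fun hf => hv (by simpa [f] using congr($hf v))
  set U := interior s ∩ interior t
  by_contra hU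
  have himage : f '' U = {c} := by
    refine ((nonempty_iff_ne_empty.2 hU).image f).subset_singleton_iff.1 ?_
    rintro _ ⟨x, hx, rfl⟩
    exact h.inner_eq_of_mem_inter ⟨interior_subset hx.1, interior_subset hx.2⟩
  exact not_isOpen_singleton c <|
    himage ▸ f.isOpenMap_of_ne_zero hf U (isOpen_interior.inter isOpen_interior)

lemma Separates.flowDependsOn (h : Separates v c s t) (hv : v ≠ 0) {Ω : E} (hΩ : 0 < ⟪v, Ω⟫)
    (hface : ¬ Collinear ℝ (s ∩ t)) : FlowDependsOn Ω s t := by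
  have hv' : 0 < ‖v‖ := norm_pos_iff.2 hv
  refine ⟨‖v‖⁻¹ • v, by simp [norm_smul, hv'.ne'], hface, fun x hx y hy => ?_,
    fun x hx y hy => ?_, by rw [real_inner_smul_left]; positivity⟩
  · rw [real_inner_smul_left, inner_sub_right, h.inner_eq_of_mem_inter hx,
      h.inner_eq_of_mem_inter hy, sub_self, mul_zero]
  · rw [real_inner_smul_left, inner_sub_right, h.inner_eq_of_mem_inter hy]
    exact mul_nonneg (inv_nonneg.2 hv'.le) (sub_nonneg.2 (h.1 hx))

end InnerProductSpace

lemma interior_convexHull_nonempty_of_linearIndependent_sub {E : Type*} [NormedAddCommGroup E]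
    [NormedSpace ℝ E] [FiniteDimensional ℝ E] {ι : Type*} [Fintype ι] {s : Set E} {q : E}
    {p : ι → E} (hq : q ∈ s) (hp : ∀ k, p k ∈ s) (hli : LinearIndependent ℝ (fun k => p k - q))
    (hcard : Fintype.card ι = finrank ℝ E) : (interior (convexHull ℝ s)).Nonempty := by
  rw [interior_convexHull_nonempty_iff_affineSpan_eq_top,
    AffineSubspace.affineSpan_eq_top_iff_vectorSpan_eq_top_of_nonempty ℝ E E ⟨q, hq⟩, eq_top_iff,
    ← hli.span_eq_top_of_card_eq_finrank' hcard, Submodule.span_le]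
  rintro _ ⟨k, rfl⟩
  exact vsub_mem_vectorSpan ℝ (hp k) hq

lemma Collinear.sub_mul_sub_eq {ι : Type*} {s : Set (EuclideanSpace ℝ ι)} (h : Collinear ℝ s)
    {p q r : EuclideanSpace ℝ ι} (hp : p ∈ s) (hq : q ∈ s) (hr : r ∈ s) (i j : ι) :
    (q i - p i) * (r j - p j) = (q j - p j) * (r i - p i) := by
  obtain ⟨v, hv⟩ := (collinear_iff_of_mem hp).1 h
  obtain ⟨a, rfl⟩ := hv q hq
  obtain ⟨b, rfl⟩ := hv r hr
  simp only [vadd_eq_add, PiLp.add_apply, PiLp.smul_apply, smul_eq_mul, add_sub_cancel_right]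
  ring

/-- Vertices `0`–`3` span the bottom face `z = 0` and `4`–`7` the top face `z = 1`. The numbering
turns with the prism, so vertices `1`, `5`, `6` of prism `i` are vertices `3`, `7`, `6` of prism
`i + 1`, and the edges from vertex `0` to vertices `1`, `3`, `4` are mutually orthogonal. -/
noncomputable def prismVertex : Fin 4 → Fin 8 → EuclideanSpace ℝ (Fin 3) :=
  ![![!₂[0, 0, 0], !₂[2, 0, 0], !₂[2, 1, 0], !₂[0, 1, 0],
      !₂[0, 0, 1], !₂[3/2, 0, 1], !₂[3/2, 3/2, 1], !₂[0, 3/2, 1]],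
    ![!₂[3, 0, 0], !₂[3, 2, 0], !₂[2, 2, 0], !₂[2, 0, 0],
      !₂[3, 0, 1], !₂[3, 3/2, 1], !₂[3/2, 3/2, 1], !₂[3/2, 0, 1]],
    ![!₂[3, 3, 0], !₂[1, 3, 0], !₂[1, 2, 0], !₂[3, 2, 0],
      !₂[3, 3, 1], !₂[3/2, 3, 1], !₂[3/2, 3/2, 1], !₂[3, 3/2, 1]],
    ![!₂[0, 3, 0], !₂[0, 1, 0], !₂[1, 1, 0], !₂[1, 3, 0],
      !₂[0, 3, 1], !₂[0, 3/2, 1], !₂[3/2, 3/2, 1], !₂[3/2, 3, 1]]]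

def prism (i : Fin 4) : Set (EuclideanSpace ℝ (Fin 3)) :=
  convexHull ℝ (range (prismVertex i))

def facetNormal : Fin 4 → EuclideanSpace ℝ (Fin 3) :=
  ![!₂[-2, 0, -1], !₂[0, -2, -1], !₂[2, 0, -1], !₂[0, 2, -1]]

def facetLevel : Fin 4 → ℝ := ![-4, -4, 2, 2]

def diagonalNormal : Fin 4 → EuclideanSpace ℝ (Fin 3) :=
  ![!₂[0, -2, -1], !₂[2, 0, 1], !₂[0, 2, 1], !₂[-2, 0, -1]]

def diagonalLevel : Fin 4 → ℝ := ![-4, 4, 4, -4]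

lemma separates_prism_add_one (i : Fin 4) :
    Separates (facetNormal i) (facetLevel i) (prism i) (prism (i + 1)) := by
  refine separates_convexHull_range (fun k => ?_) (fun k => ?_) <;>
    fin_cases i <;> fin_cases k <;>
    simp [prismVertex, facetNormal, facetLevel, EuclideanSpace.inner_eq_star_dotProduct,
      Fin.sum_univ_three, dotProduct] <;> norm_num

lemma separates_prism_add_two (i : Fin 4) :
    Separates (diagonalNormal i) (diagonalLevel i) (prism i) (prism (i + 2)) := by
  refine separates_convexHull_range (fun k => ?_) (fun k => ?_) <;>
    fin_cases i <;> fin_cases k <;>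
    simp [prismVertex, diagonalNormal, diagonalLevel, EuclideanSpace.inner_eq_star_dotProduct,
      Fin.sum_univ_three, dotProduct] <;> norm_num

lemma prismVertex_shared (i : Fin 4) :
    prismVertex (i + 1) 3 = prismVertex i 1 ∧ prismVertex (i + 1) 7 = prismVertex i 5 ∧
      prismVertex (i + 1) 6 = prismVertex i 6 := by
  fin_cases i <;> refine ⟨?_, ?_, ?_⟩ <;> ext k <;> fin_cases k <;> simp [prismVertex]

lemma not_collinear_prism_inter_prism_add_one (i : Fin 4) :
    ¬ Collinear ℝ (prism i ∩ prism (i + 1)) := by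
  intro h
  have hmem : ∀ k, prismVertex i k ∈ prism i := fun k => subset_convexHull ℝ _ (mem_range_self k)
  have hmem' : ∀ k, prismVertex (i + 1) k ∈ prism (i + 1) :=
    fun k => subset_convexHull ℝ _ (mem_range_self k)
  obtain ⟨h1, h5, h6⟩ := prismVertex_shared i
  have := h.sub_mul_sub_eq ⟨hmem 1, h1 ▸ hmem' 3⟩ ⟨hmem 5, h5 ▸ hmem' 7⟩ ⟨hmem 6, h6 ▸ hmem' 6⟩ 0 1
  fin_cases i <;> simp [prismVertex] at this <;> norm_num at this

lemma interior_prism_nonempty (i : Fin 4) : (interior (prism i)).Nonempty := by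
  have hmem : ∀ k, prismVertex i k ∈ range (prismVertex i) := mem_range_self
  refine interior_convexHull_nonempty_of_linearIndependent_sub (hmem 0)
    (p := fun k : Fin 3 => prismVertex i (![1, 3, 4] k)) (fun k => hmem _) ?_ (by simp)
  refine linearIndependent_of_ne_zero_of_inner_eq_zero (fun k => ?_) (fun k l hkl => ?_)
  · fin_cases i <;> fin_cases k <;> simp [prismVertex, sub_eq_zero]
  · fin_cases i <;> fin_cases k <;> fin_cases l <;> simp at hkl <;>
      simp [prismVertex, EuclideanSpace.inner_eq_star_dotProduct, Fin.sum_univ_three, dotProduct]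

lemma prism_flowDependsOn_add_one (i : Fin 4) :
    FlowDependsOn !₂[0, 0, -1] (prism i) (prism (i + 1)) :=
  (separates_prism_add_one i).flowDependsOn (by fin_cases i <;> simp [facetNormal])
    (by fin_cases i <;> simp [facetNormal, EuclideanSpace.inner_eq_star_dotProduct,
      Fin.sum_univ_three, dotProduct])
    (not_collinear_prism_inter_prism_add_one i)

lemma interior_prism_inter_interior_prism {i j : Fin 4} (hij : i ≠ j) :
    interior (prism i) ∩ interior (prism j) = ∅ := by
  obtain rfl | rfl | rfl : j = i + 1 ∨ j = i + 2 ∨ i = j + 1 := by revert i j; decide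
  · exact (separates_prism_add_one i).interior_inter_interior_eq_empty
      (by fin_cases i <;> simp [facetNormal])
  · exact (separates_prism_add_two i).interior_inter_interior_eq_empty
      (by fin_cases i <;> simp [diagonalNormal])
  · rw [inter_comm]
    exact (separates_prism_add_one j).interior_inter_interior_eq_empty
      (by fin_cases j <;> simp [facetNormal])

/-- 3D counterexample: there is a finite family of convex polytopes
(convex quadrilateral prisms) in `ℝ³` with pairwise disjoint interiors such
that, for the direction `Ω = (0,0,−1)`, the dependency relation — cell `i`
depends on cell `j` if they share a 2-dimensional face whose unit normal `n`
pointing into cell `i` satisfies `⟨n, Ω⟩ > 0` — contains a directed cycle. -/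
theorem cyclic_dependency_in_3d :
    ∃ (I : ℕ) (cells : Fin I → Set (EuclideanSpace ℝ (Fin 3))),
      (∀ i, ∃ S : Finset (EuclideanSpace ℝ (Fin 3)),
        cells i = convexHull ℝ (S : Set (EuclideanSpace ℝ (Fin 3))) ∧
        (interior (cells i)).Nonempty) ∧
      (∀ i j, i ≠ j → interior (cells i) ∩ interior (cells j) = ∅) ∧
      HasDirectedCycle (fun i j =>
        ∃ n : EuclideanSpace ℝ (Fin 3),
          ‖n‖ = 1 ∧
          ¬ Collinear ℝ (cells i ∩ cells j) ∧
          (∀ x ∈ cells i ∩ cells j, ∀ y ∈ cells i ∩ cells j,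
            ⟪n, x - y⟫ = 0) ∧
          (∀ x ∈ cells i, ∀ y ∈ cells i ∩ cells j, 0 ≤ ⟪n, x - y⟫) ∧
          0 < ⟪n, (WithLp.toLp 2 (fun k => ![(0:ℝ), 0, -1] k) : EuclideanSpace ℝ (Fin 3))⟫) := by
  classical
  refine ⟨4, prism, fun i => ⟨Finset.univ.image (prismVertex i), by simp [prism],
    interior_prism_nonempty i⟩, fun i j => interior_prism_inter_interior_prism,
    hasDirectedCycle_of_forall_add_one _ prism_flowDependsOn_add_one⟩
end
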